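/- arXiv:1607.08805 — 8 statements merged into one kernel-verified Lean document; each statement's English description precedes it below -/
import Mathlib

section
/- Let n ≥ 2 be a natural number, let c ≥ 0 be a real number, and let g : ℕ → ℝ satisfy g(n+1) = 0 and g(ℓ) ≥ c/n + (1 − 1/ℓ)·g(ℓ+1) for all natural numbers ℓ with 2 ≤ ℓ ≤ n. Then for all ℓ with 2 ≤ ℓ ≤ n, g(ℓ) ≥ ((ℓ−1)/n)·ln(n/ℓ)·c. -/
/-!
Dividing the recursion by `ℓ - 1` turns it into `g ℓ / (ℓ - 1) ≥ c / (n (ℓ - 1)) + g (ℓ + 1) / ℓ`.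
Since `log ℓ - log (ℓ - 1) ≤ 1 / (ℓ - 1)`, the potential `g ℓ / (ℓ - 1) + (c / n) log (ℓ - 1)` is
antitone on `[2, n + 1]`, and comparing its values at `ℓ` and at `n + 1`, where `g` vanishes, gives
`g ℓ ≥ ((ℓ - 1) / n) (log n - log (ℓ - 1)) c`.
-/

open Real Set

lemma Real.log_sub_log_le_div {x y : ℝ} (hx : 0 < x) (hy : 0 < y) :
    log x - log y ≤ (x - y) / y := by
  rw [← log_div hx.ne' hy.ne', sub_div, div_self hy.ne']
  exact log_le_sub_one_of_pos (div_pos hx hy)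

lemma antitoneOn_div_pred_add_log_pred {a : ℝ} (ha : 0 ≤ a) {g : ℕ → ℝ} {N : ℕ}
    (hrec : ∀ ℓ : ℕ, 2 ≤ ℓ → ℓ ≤ N → g ℓ ≥ a + (1 - 1 / (ℓ : ℝ)) * g (ℓ + 1)) :
    AntitoneOn (fun k : ℕ => g k / ((k : ℝ) - 1) + a * log ((k : ℝ) - 1)) (Icc 2 (N + 1)) := by
  refine antitoneOn_of_succ_le ordConnected_Icc fun k _ hk hk' => ?_
  simp only [Order.succ_eq_add_one, mem_Icc] at hk hk' ⊢
  have hk2 : (2 : ℝ) ≤ k := by exact_mod_cast hk.1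
  have hpred : (0 : ℝ) < k - 1 := by linarith
  have hdiv : g (k + 1) / k ≤ g k / (k - 1) - a / (k - 1) := by
    have h := hrec k hk.1 (by omega)
    have hk0 : (k : ℝ) ≠ 0 := by positivity
    have hscale : (1 - 1 / (k : ℝ)) * g (k + 1) * k = (k - 1) * g (k + 1) := by
      field_simp
    rw [← sub_div, div_le_div_iff₀ (by positivity) hpred]
    nlinarith [mul_le_mul_of_nonneg_right h (Nat.cast_nonneg k)]
  have hlog : a * (log k - log (k - 1)) ≤ a / (k - 1) := by
    have := log_sub_log_le_div (x := k) (by linarith) hpred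
    rw [sub_sub_cancel, one_div] at this
    rw [div_eq_mul_inv]
    exact mul_le_mul_of_nonneg_left this ha
  push_cast
  rw [add_sub_cancel_right]
  linarith

theorem secretary_tentative_recursion_general (n : ℕ) (c : ℝ) (hc : 0 ≤ c)
    (g : ℕ → ℝ) (hg0 : g (n + 1) = 0)
    (hrec : ∀ ℓ : ℕ, 2 ≤ ℓ → ℓ ≤ n →
      g ℓ ≥ c / n + (1 - 1 / (ℓ : ℝ)) * g (ℓ + 1)) :
    ∀ ℓ : ℕ, 2 ≤ ℓ → ℓ ≤ n →
      g ℓ ≥ ((ℓ : ℝ) - 1) / n * Real.log ((n : ℝ) / ℓ) * c := by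
  intro ℓ hℓ hℓn
  have hℓ2 : (2 : ℝ) ≤ ℓ := by exact_mod_cast hℓ
  have hpred : (0 : ℝ) < ℓ - 1 := by linarith
  have hn : (0 : ℝ) < n := by exact_mod_cast (by omega : 0 < n)
  have hcn : 0 ≤ c / n := by positivity
  have hmono := antitoneOn_div_pred_add_log_pred hcn hrec
    (show ℓ ∈ Icc 2 (n + 1) by simp only [mem_Icc]; omega)
    (show n + 1 ∈ Icc 2 (n + 1) by simp only [mem_Icc]; omega) (by omega)
  simp only [hg0, zero_div, zero_add, Nat.cast_add, Nat.cast_one, add_sub_cancel_right] at hmono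
  have hbound : (ℓ - 1) * (c / n * (log n - log (ℓ - 1))) ≤ g ℓ := by
    rw [mul_comm, ← le_div_iff₀ hpred]
    linarith
  have hlog : log (n / ℓ) ≤ log n - log (ℓ - 1) := by
    rw [log_div hn.ne' (by positivity)]
    linarith [log_le_log hpred (by linarith : (ℓ : ℝ) - 1 ≤ ℓ)]
  calc ((ℓ : ℝ) - 1) / n * log (n / ℓ) * c
      = (ℓ - 1) * (c / n * log (n / ℓ)) := by ring
    _ ≤ (ℓ - 1) * (c / n * (log n - log (ℓ - 1))) := by gcongr
    _ ≤ g ℓ := hbound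

/-- The recursion from Proposition 1 of the paper has solution
`g ℓ ≥ ((ℓ-1)/n) ln(n/ℓ) c`. -/
theorem secretary_tentative_recursion (n : ℕ) (hn : 2 ≤ n) (c : ℝ) (hc : 0 ≤ c)
    (g : ℕ → ℝ) (hg0 : g (n + 1) = 0)
    (hrec : ∀ ℓ : ℕ, 2 ≤ ℓ → ℓ ≤ n →
      g ℓ ≥ c / n + (1 - 1 / (ℓ : ℝ)) * g (ℓ + 1)) :
    ∀ ℓ : ℕ, 2 ≤ ℓ → ℓ ≤ n →
      g ℓ ≥ ((ℓ : ℝ) - 1) / n * Real.log ((n : ℝ) / ℓ) * c :=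
  secretary_tentative_recursion_general n c hc g hg0 hrec
end

section
/- Let k ≥ 2 and n be natural numbers, let c ≥ 0 be a real number, and let g : ℕ × ℕ → ℝ satisfy: g(n+1, r) = 0 for all r; g(ℓ, 0) ≥ 0 for all ℓ; and for all ℓ with k² + k ≤ ℓ ≤ n and all r with 1 ≤ r ≤ k, g(ℓ, r) ≥ ∑_{j=ℓ}^{n} ((ℓ−k)/(j−k))^k · ((k−1)/(j+1) · g(j+1, r−1) + c/n). Then for all ℓ with k² + k ≤ ℓ ≤ n and all r with 0 ≤ r ≤ k, g(ℓ, r) ≥ ( rℓ/((k−1)n) − (1/(k−1))·(ℓ/n)^k · ∑_{r'=0}^{r−1} ∑_{i=0}^{r'} ((k−1)^i / i!)·(ln(n/ℓ))^i − 3k²r/((k−1)n) ) · c. -/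
/-!
Induction on `r`, with `S_r(x) = ∑_{r' < r} ∑_{i ≤ r'} (k-1)^i x^i / i!` (`expDoubleSum`) and the
claimed bound divided by `c` as `solvedBound`. Inserting the induction hypothesis at `j + 1` into
the recursion splits it into three sums over `ℓ ≤ j < n`, each bounded by telescoping, the discrete
form of comparing it with an integral:
* `∑ ((ℓ-k)/(j-k))^k ≥ ((ℓ-k) - n (ℓ/n)^k) / (k-1)`, from the antiderivative of `(x-k)^(-k)`;
* `S_{r+1}(x) - S_{r+1}(y) ≥ (k-1)(x-y) S_r(y)` for `0 ≤ y ≤ x` and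
  `log (n/j) - log (n/(j+1)) ≥ 1/(j+1)`, so the sum carrying `S_r(log (n/(j+1))) / (j+1)` telescopes
  to `(S_{r+1}(log (n/ℓ)) - (r+1)) / (k-1)`, up to the factor `((j+1)/j)^k ≤ 1 + 2k/ℓ`;
* `∑ ((ℓ-k)/(j-k))^k / (j+1) ≤ 1/ℓ + 1/k`.
The errors are absorbed by the `3k²` term, using `S_{r+1}(log (n/ℓ)) ≤ (r+1)(n/ℓ)^(k-1)` and
`k r ≤ ℓ`.
-/

open Finset Real
open scoped Nat

section Elementary

variable {x y : ℝ}

lemma mul_pow_mul_sub_le_pow_sub_pow (hy : 0 ≤ y) (hyx : y ≤ x) (m : ℕ) :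
    (m + 1) * y ^ m * (x - y) ≤ x ^ (m + 1) - y ^ (m + 1) := by
  rw [← geom_sum₂_mul, Nat.add_sub_cancel]
  refine mul_le_mul_of_nonneg_right ?_ (sub_nonneg.2 hyx)
  calc (m + 1) * y ^ m = ∑ i ∈ range (m + 1), y ^ i * y ^ (m - i) := by
        rw [sum_congr rfl fun i hi => pow_mul_pow_sub y (Nat.lt_succ_iff.1 (mem_range.1 hi))]
        simp
    _ ≤ ∑ i ∈ range (m + 1), x ^ i * y ^ (m - i) := by gcongr

lemma pow_sub_pow_le_mul_pow_mul_sub (hy : 0 ≤ y) (hyx : y ≤ x) (m : ℕ) :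
    x ^ (m + 1) - y ^ (m + 1) ≤ (m + 1) * x ^ m * (x - y) := by
  rw [← geom_sum₂_mul, Nat.add_sub_cancel]
  refine mul_le_mul_of_nonneg_right ?_ (sub_nonneg.2 hyx)
  calc ∑ i ∈ range (m + 1), x ^ i * y ^ (m - i)
      ≤ ∑ i ∈ range (m + 1), x ^ i * x ^ (m - i) := by
        gcongr with i
        exact pow_nonneg (hy.trans hyx) i
    _ = (m + 1) * x ^ m := by
        rw [sum_congr rfl fun i hi => pow_mul_pow_sub x (Nat.lt_succ_iff.1 (mem_range.1 hi))]
        simp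

lemma one_div_pow_sub_one_div_pow_le (hy : 0 < y) (hyx : y ≤ x) (m : ℕ) :
    1 / y ^ (m + 1) - 1 / x ^ (m + 1) ≤ (m + 1) * (x - y) / y ^ (m + 2) := by
  have hx : 0 < x := hy.trans_le hyx
  have hpow := pow_sub_pow_le_mul_pow_mul_sub hy.le hyx m
  rw [div_sub_div _ _ (by positivity) (by positivity),
    div_le_div_iff₀ (by positivity) (by positivity)]
  calc (1 * x ^ (m + 1) - y ^ (m + 1) * 1) * y ^ (m + 2)
      ≤ ((m + 1) * x ^ m * (x - y)) * (y * y ^ (m + 1)) := by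
        rw [← pow_succ']; gcongr; linarith
    _ ≤ ((m + 1) * x ^ m * (x - y)) * (x * y ^ (m + 1)) := by gcongr
    _ = (m + 1) * (x - y) * (y ^ (m + 1) * x ^ (m + 1)) := by ring

lemma le_one_div_pow_sub_one_div_pow (hy : 0 < y) (hyx : y ≤ x) (m : ℕ) :
    (m + 1) * (x - y) / x ^ (m + 2) ≤ 1 / y ^ (m + 1) - 1 / x ^ (m + 1) := by
  have hx : 0 < x := hy.trans_le hyx
  have hpow := mul_pow_mul_sub_le_pow_sub_pow hy.le hyx m
  rw [div_sub_div _ _ (by positivity) (by positivity),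
    div_le_div_iff₀ (by positivity) (by positivity)]
  calc (m + 1) * (x - y) * (y ^ (m + 1) * x ^ (m + 1))
      = ((m + 1) * y ^ m * (x - y)) * (y * x ^ (m + 1)) := by ring
    _ ≤ (1 * x ^ (m + 1) - y ^ (m + 1) * 1) * (x * x ^ (m + 1)) := by
        gcongr
        · nlinarith [pow_le_pow_left₀ hy.le hyx (m + 1)]
        · linarith
    _ = (1 * x ^ (m + 1) - y ^ (m + 1) * 1) * x ^ (m + 2) := by ring

lemma one_add_pow_le_one_add_two_mul (hx : 0 ≤ x) {k : ℕ} (hkx : k * x ≤ 1 / 2) :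
    (1 + x) ^ k ≤ 1 + 2 * k * x := by
  have hkx0 : 0 ≤ k * x := by positivity
  calc (1 + x) ^ k ≤ exp x ^ k := by gcongr; linarith [add_one_le_exp x]
    _ = exp (k * x) := (exp_nat_mul x k).symm
    _ ≤ 1 / (1 - k * x) := exp_bound_div_one_sub_of_interval hkx0 (by linarith)
    _ ≤ 1 + 2 * k * x := by
        rw [div_le_iff₀ (by linarith)]
        nlinarith

lemma sum_Ico_sub_succ (F : ℕ → ℝ) {m n : ℕ} (hmn : m ≤ n) :
    ∑ i ∈ Ico m n, (F i - F (i + 1)) = F m - F n := by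
  rw [← neg_sub, ← sum_Ico_sub F hmn, ← sum_neg_distrib]
  simp

lemma sum_Ico_le_add_sum_Ico_succ {f : ℕ → ℝ} (hf : ∀ i, 0 ≤ f i) (m n : ℕ) :
    ∑ i ∈ Ico m n, f i ≤ f m + ∑ i ∈ Ico m n, f (i + 1) := by
  rcases le_or_gt n m with h | h
  · rw [Ico_eq_empty_of_le h, sum_empty, sum_empty, add_zero]
    exact hf m
  · rw [sum_Ico_add', sum_eq_sum_Ico_succ_bot h]
    exact add_le_add_right
      (sum_le_sum_of_subset_of_nonneg (Ico_subset_Ico_right n.le_succ) fun i _ _ => hf i) _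

end Elementary

noncomputable def expTaylor (a x : ℝ) (m : ℕ) : ℝ :=
  ∑ i ∈ range m, a ^ i / i ! * x ^ i

noncomputable def expDoubleSum (a x : ℝ) (r : ℕ) : ℝ :=
  ∑ r' ∈ range r, expTaylor a x (r' + 1)

section ExpSums

variable {a x y : ℝ}

lemma expTaylor_nonneg (ha : 0 ≤ a) (hx : 0 ≤ x) (m : ℕ) : 0 ≤ expTaylor a x m := by
  unfold expTaylor; positivity

lemma expTaylor_le_exp (ha : 0 ≤ a) (hx : 0 ≤ x) (m : ℕ) :
    expTaylor a x m ≤ exp (a * x) := by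
  have h : expTaylor a x m = ∑ i ∈ range m, (a * x) ^ i / i ! :=
    sum_congr rfl fun i _ => by rw [mul_pow]; ring
  exact h ▸ sum_le_exp_of_nonneg (mul_nonneg ha hx) m

lemma expTaylor_zero_right (a : ℝ) (m : ℕ) : expTaylor a 0 (m + 1) = 1 := by
  simp [expTaylor, sum_range_succ']

lemma mul_sub_mul_expTaylor_le (hy : 0 ≤ y) (hyx : y ≤ x) (ha : 0 ≤ a) (m : ℕ) :
    a * (x - y) * expTaylor a y m ≤ expTaylor a x (m + 1) - expTaylor a y (m + 1) := by
  have hterm : ∀ i ∈ range m, a * (x - y) * (a ^ i / i ! * y ^ i) ≤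
      a ^ (i + 1) / (i + 1)! * x ^ (i + 1) - a ^ (i + 1) / (i + 1)! * y ^ (i + 1) := by
    intro i _
    calc a * (x - y) * (a ^ i / i ! * y ^ i)
        = a ^ (i + 1) / (i + 1)! * ((i + 1) * y ^ i * (x - y)) := by
          rw [Nat.factorial_succ]; push_cast; field_simp; ring
      _ ≤ a ^ (i + 1) / (i + 1)! * (x ^ (i + 1) - y ^ (i + 1)) := by
          gcongr; exact mul_pow_mul_sub_le_pow_sub_pow hy hyx i
      _ = _ := by ring
  simp only [expTaylor, sum_range_succ' _ m, mul_sum]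
  linarith [sum_le_sum hterm, sum_sub_distrib (s := range m)
    (fun i => a ^ (i + 1) / (i + 1)! * x ^ (i + 1))
    (fun i => a ^ (i + 1) / (i + 1)! * y ^ (i + 1))]

lemma expDoubleSum_nonneg (ha : 0 ≤ a) (hx : 0 ≤ x) (r : ℕ) : 0 ≤ expDoubleSum a x r :=
  sum_nonneg fun _ _ => expTaylor_nonneg ha hx _

lemma expDoubleSum_le (ha : 0 ≤ a) (hx : 0 ≤ x) (r : ℕ) :
    expDoubleSum a x r ≤ r * exp (a * x) := by
  simpa [expDoubleSum] using
    sum_le_sum fun r' (_ : r' ∈ range r) => expTaylor_le_exp ha hx (r' + 1)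

lemma expDoubleSum_zero_right (a : ℝ) (r : ℕ) : expDoubleSum a 0 r = r := by
  simp [expDoubleSum, expTaylor_zero_right]

lemma mul_sub_mul_expDoubleSum_le (hy : 0 ≤ y) (hyx : y ≤ x) (ha : 0 ≤ a) (r : ℕ) :
    a * (x - y) * expDoubleSum a y r ≤
      expDoubleSum a x (r + 1) - expDoubleSum a y (r + 1) := by
  have h := sum_le_sum fun r' (_ : r' ∈ range (r + 1)) => mul_sub_mul_expTaylor_le hy hyx ha r'
  rw [← mul_sum, sum_range_succ', sum_sub_distrib] at h
  simpa [expDoubleSum, expTaylor] using h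

lemma div_mul_expDoubleSum_log_le (ha : 0 ≤ a) {t N : ℝ} (ht : 0 < t) (htN : t + 1 ≤ N)
    (r : ℕ) :
    a / (t + 1) * expDoubleSum a (log (N / (t + 1))) r ≤
      expDoubleSum a (log (N / t)) (r + 1) - expDoubleSum a (log (N / (t + 1))) (r + 1) := by
  have hN : 0 < N := by linarith
  have hy : 0 ≤ log (N / (t + 1)) := log_nonneg ((one_le_div (by linarith)).2 htN)
  have hgap : 1 / (t + 1) ≤ log (N / t) - log (N / (t + 1)) := by
    have h := one_sub_inv_le_log_of_pos (x := (t + 1) / t) (by positivity)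
    rw [log_div hN.ne' ht.ne', log_div hN.ne' (by positivity)]
    rw [log_div (by positivity) ht.ne', inv_div] at h
    have : 1 - t / (t + 1) = 1 / (t + 1) := by field_simp; ring
    linarith
  have hyx : log (N / (t + 1)) ≤ log (N / t) := by
    linarith [one_div_pos.2 (by linarith : 0 < t + 1)]
  calc a / (t + 1) * expDoubleSum a (log (N / (t + 1))) r
      = a * (1 / (t + 1)) * expDoubleSum a (log (N / (t + 1))) r := by ring
    _ ≤ a * (log (N / t) - log (N / (t + 1))) * expDoubleSum a (log (N / (t + 1))) r := by
        gcongr; exact expDoubleSum_nonneg ha hy r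
    _ ≤ _ := mul_sub_mul_expDoubleSum_le hy hyx ha r

lemma pow_mul_expDoubleSum_log_le {u N : ℝ} (hu : 0 < u) (huN : u ≤ N) (k r : ℕ) (hk : 1 ≤ k) :
    (u / N) ^ k * expDoubleSum (k - 1) (log (N / u)) r ≤ r * (u / N) := by
  obtain ⟨m, rfl⟩ : ∃ m, k = m + 1 := ⟨k - 1, by omega⟩
  have hN : 0 < N := hu.trans_le huN
  have hexp : exp (m * log (N / u)) = (N / u) ^ m := by
    rw [← log_pow, exp_log (by positivity)]
  have hE := expDoubleSum_le (a := m) (by positivity) (log_nonneg ((one_le_div hu).2 huN)) r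
  push_cast
  rw [add_sub_cancel_right]
  calc (u / N) ^ (m + 1) * expDoubleSum m (log (N / u)) r
      ≤ (u / N) ^ (m + 1) * (r * (N / u) ^ m) := by rw [← hexp]; gcongr
    _ = r * (u / N) * ((u / N) * (N / u)) ^ m := by ring
    _ = r * (u / N) := by
        rw [div_mul_div_cancel₀ hN.ne', div_self hu.ne', one_pow, mul_one]

end ExpSums

noncomputable def secretaryWeight (k ℓ j : ℕ) : ℝ := (((ℓ : ℝ) - k) / ((j : ℝ) - k)) ^ k

section Weights

variable {k ℓ n : ℕ}

lemma sub_div_sub_le_div {K L J : ℝ} (hK : 0 ≤ K) (hKL : K < L) (hLJ : L ≤ J) :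
    (L - K) / (J - K) ≤ L / J := by
  rw [div_le_div_iff₀ (by linarith) (by linarith)]
  nlinarith

lemma secretaryWeight_nonneg (hkℓ : k < ℓ) {j : ℕ} (hℓj : ℓ ≤ j) :
    0 ≤ secretaryWeight k ℓ j := by
  have : (k : ℝ) < ℓ := by exact_mod_cast hkℓ
  have : (ℓ : ℝ) ≤ j := by exact_mod_cast hℓj
  exact pow_nonneg (div_nonneg (by linarith) (by linarith)) k

lemma secretaryWeight_le (hkℓ : k < ℓ) {j : ℕ} (hℓj : ℓ ≤ j) :
    secretaryWeight k ℓ j ≤ ((ℓ : ℝ) / j) ^ k := by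
  have hkℓ' : (k : ℝ) < ℓ := by exact_mod_cast hkℓ
  have hℓj' : (ℓ : ℝ) ≤ j := by exact_mod_cast hℓj
  exact pow_le_pow_left₀ (div_nonneg (by linarith) (by linarith))
    (sub_div_sub_le_div (Nat.cast_nonneg k) hkℓ' hℓj') k

lemma sub_div_le_sum_secretaryWeight (hk : 2 ≤ k) (hkℓ : k < ℓ) (hℓn : ℓ ≤ n) :
    (((ℓ : ℝ) - k) - n * ((ℓ : ℝ) / n) ^ k) / (k - 1) ≤
      ∑ j ∈ Ico ℓ n, secretaryWeight k ℓ j := by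
  obtain ⟨m, rfl⟩ : ∃ m, k = m + 2 := ⟨k - 2, by omega⟩
  have hkℓ' : (m : ℝ) + 2 < ℓ := by exact_mod_cast hkℓ
  have hℓn' : (ℓ : ℝ) ≤ n := by exact_mod_cast hℓn
  set A : ℝ := ℓ - (m + 2) with hA_def
  have hA : 0 < A := by linarith
  have hn : 0 < (n : ℝ) - (m + 2) := by linarith
  set F : ℕ → ℝ := fun j => A ^ (m + 2) / (m + 1) * (1 / ((j : ℝ) - (m + 2)) ^ (m + 1)) with hF
  have hstep : ∀ j ∈ Ico ℓ n, F j - F (j + 1) ≤ secretaryWeight (m + 2) ℓ j := by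
    intro j hj
    have hj : (ℓ : ℝ) ≤ j := by exact_mod_cast (mem_Ico.1 hj).1
    have hx : 0 < (j : ℝ) - (m + 2) := by linarith
    have hdiff := one_div_pow_sub_one_div_pow_le hx (le_add_of_nonneg_right zero_le_one) m
    simp only [hF, secretaryWeight]
    push_cast
    rw [← mul_sub, div_pow, show (j : ℝ) + 1 - (m + 2) = (j : ℝ) - (m + 2) + 1 by ring]
    calc A ^ (m + 2) / (m + 1) * (1 / ((j : ℝ) - (m + 2)) ^ (m + 1)
          - 1 / ((j : ℝ) - (m + 2) + 1) ^ (m + 1))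
        ≤ A ^ (m + 2) / (m + 1) * ((m + 1) * ((j : ℝ) - (m + 2) + 1 - ((j : ℝ) - (m + 2)))
          / ((j : ℝ) - (m + 2)) ^ (m + 2)) := by gcongr
      _ = A ^ (m + 2) / ((j : ℝ) - (m + 2)) ^ (m + 2) := by field_simp; ring
  have hFℓ : F ℓ = A / (m + 1) := by
    simp only [hF, ← hA_def]; field_simp [hA.ne']; ring
  have hFn : F n ≤ n * ((ℓ : ℝ) / n) ^ (m + 2) / (m + 1) := by
    have hratio : A / (n - (m + 2)) ≤ ℓ / n := sub_div_sub_le_div (by positivity) hkℓ' hℓn'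
    have hn0 : (0 : ℝ) < n := by linarith
    calc F n = A * (A / (n - (m + 2))) ^ (m + 1) / (m + 1) := by
          simp only [hF]; rw [div_pow]; field_simp; ring
      _ ≤ ℓ * ((ℓ : ℝ) / n) ^ (m + 1) / (m + 1) := by gcongr; linarith
      _ = n * ((ℓ : ℝ) / n) ^ (m + 2) / (m + 1) := by
          rw [div_pow, div_pow]; field_simp; ring
  push_cast
  calc ((ℓ : ℝ) - (m + 2) - n * ((ℓ : ℝ) / n) ^ (m + 2)) / (m + 2 - 1)
      ≤ F ℓ - F n := by
        rw [hFℓ, ← hA_def, show (m : ℝ) + 2 - 1 = m + 1 by ring, sub_div]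
        linarith
    _ = ∑ j ∈ Ico ℓ n, (F j - F (j + 1)) := (sum_Ico_sub_succ F hℓn).symm
    _ ≤ _ := sum_le_sum hstep

lemma sum_secretaryWeight_div_le (hk : 1 ≤ k) (hkℓ : k < ℓ) (hℓn : ℓ ≤ n) :
    ∑ j ∈ Ico ℓ n, secretaryWeight k ℓ j / (j + 1) ≤ 1 / ℓ + 1 / k := by
  obtain ⟨m, rfl⟩ : ∃ m, k = m + 1 := ⟨k - 1, by omega⟩
  have hℓ : (0 : ℝ) < ℓ := by exact_mod_cast (by omega : 0 < ℓ)
  set f : ℕ → ℝ := fun j => (ℓ : ℝ) ^ (m + 1) / (j : ℝ) ^ (m + 2) with hf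
  set F : ℕ → ℝ := fun j => (ℓ : ℝ) ^ (m + 1) / (m + 1) * (1 / (j : ℝ) ^ (m + 1)) with hF
  have hterm : ∀ j ∈ Ico ℓ n, secretaryWeight (m + 1) ℓ j / (j + 1) ≤ f j := by
    intro j hj
    have hℓj := (mem_Ico.1 hj).1
    have hj : (0 : ℝ) < j := by exact_mod_cast (by omega : 0 < j)
    calc secretaryWeight (m + 1) ℓ j / (j + 1) ≤ ((ℓ : ℝ) / j) ^ (m + 1) / j := by
          gcongr
          · exact secretaryWeight_le hkℓ hℓj
          · linarith
      _ = f j := by rw [div_pow, div_div, ← pow_succ]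
  have hstep : ∀ j ∈ Ico ℓ n, f (j + 1) ≤ F j - F (j + 1) := by
    intro j hj
    have hj : (0 : ℝ) < j := by exact_mod_cast (by simp only [mem_Ico] at hj; omega : 0 < j)
    have hdiff := le_one_div_pow_sub_one_div_pow hj (le_add_of_nonneg_right zero_le_one) m
    simp only [hf, hF]
    push_cast
    calc (ℓ : ℝ) ^ (m + 1) / ((j : ℝ) + 1) ^ (m + 2)
        = (ℓ : ℝ) ^ (m + 1) / (m + 1) *
            ((m + 1) * ((j : ℝ) + 1 - j) / ((j : ℝ) + 1) ^ (m + 2)) := by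
          field_simp; ring
      _ ≤ _ := by rw [← mul_sub]; gcongr
  have hfℓ : f ℓ = 1 / ℓ := by simp only [hf]; field_simp; ring
  have hFℓ : F ℓ = 1 / (m + 1) := by simp only [hF]; field_simp
  have hFn : 0 ≤ F n := by simp only [hF]; positivity
  calc ∑ j ∈ Ico ℓ n, secretaryWeight (m + 1) ℓ j / (j + 1)
      ≤ ∑ j ∈ Ico ℓ n, f j := sum_le_sum hterm
    _ ≤ f ℓ + ∑ j ∈ Ico ℓ n, f (j + 1) :=
        sum_Ico_le_add_sum_Ico_succ (fun j => by simp only [hf]; positivity) ℓ n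
    _ ≤ f ℓ + (F ℓ - F n) := by
        gcongr
        exact (sum_le_sum hstep).trans_eq (sum_Ico_sub_succ F hℓn)
    _ ≤ 1 / ℓ + 1 / ((m + 1 : ℕ) : ℝ) := by rw [hfℓ, hFℓ]; push_cast; linarith

lemma sum_secretaryWeight_mul_expDoubleSum_le (hk : 2 ≤ k) (h2k : 2 * k ≤ ℓ) (hℓn : ℓ ≤ n)
    (r : ℕ) :
    ∑ j ∈ Ico ℓ n, secretaryWeight k ℓ j *
        (((j + 1 : ℝ) / n) ^ k * expDoubleSum (k - 1) (log (n / (j + 1))) r / (j + 1)) ≤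
      (1 + 2 * k / ℓ) * ((ℓ : ℝ) / n) ^ k *
        ((expDoubleSum (k - 1) (log (n / ℓ)) (r + 1) - (r + 1)) / (k - 1)) := by
  have hk' : (2 : ℝ) ≤ k := by exact_mod_cast hk
  have h2k' : 2 * (k : ℝ) ≤ ℓ := by exact_mod_cast h2k
  have hℓ : (0 : ℝ) < ℓ := by linarith
  have hk1 : (0 : ℝ) < k - 1 := by linarith
  set F : ℕ → ℝ := fun j => expDoubleSum (k - 1) (log (n / j)) (r + 1) with hF
  set C : ℝ := (1 + 2 * k / ℓ) * ((ℓ : ℝ) / n) ^ k / (k - 1) with hC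
  have hstep : ∀ j ∈ Ico ℓ n, secretaryWeight k ℓ j *
      (((j + 1 : ℝ) / n) ^ k * expDoubleSum (k - 1) (log (n / (j + 1))) r / (j + 1)) ≤
        C * (F j - F (j + 1)) := by
    intro j hj
    obtain ⟨hℓj, hjn⟩ := mem_Ico.1 hj
    have hℓj' : (ℓ : ℝ) ≤ j := by exact_mod_cast hℓj
    have hj : (0 : ℝ) < j := by linarith
    have hjn' : (j : ℝ) + 1 ≤ n := by exact_mod_cast hjn
    set E := expDoubleSum (k - 1) (log (n / (j + 1))) r
    have hE : 0 ≤ E := expDoubleSum_nonneg hk1.le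
      (log_nonneg ((one_le_div (by positivity)).2 hjn')) r
    have hgrowth : (1 + 1 / (j : ℝ)) ^ k ≤ 1 + 2 * k / ℓ := by
      refine (one_add_pow_le_one_add_two_mul (by positivity) ?_).trans ?_
      · rw [mul_one_div, div_le_iff₀ hj]; linarith
      · rw [mul_one_div]; gcongr
    calc secretaryWeight k ℓ j * (((j + 1 : ℝ) / n) ^ k * E / (j + 1))
        ≤ ((ℓ : ℝ) / j) ^ k * (((j + 1 : ℝ) / n) ^ k * E / (j + 1)) := by
          gcongr; exact secretaryWeight_le (by omega) hℓj
      _ = ((ℓ : ℝ) / n) ^ k * (1 + 1 / (j : ℝ)) ^ k * (E / (j + 1)) := by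
          rw [← mul_pow, mul_div_assoc, ← mul_assoc, ← mul_pow]
          congr 2
          field_simp
      _ ≤ ((ℓ : ℝ) / n) ^ k * (1 + 2 * k / ℓ) * (E / (j + 1)) := by gcongr
      _ = C * ((k - 1) / (j + 1) * E) := by rw [hC]; field_simp [hk1.ne']
      _ ≤ C * (F j - F (j + 1)) := by
          gcongr
          simpa only [hF, Nat.cast_succ] using div_mul_expDoubleSum_log_le hk1.le hj hjn' r
  have hFn : F n = r + 1 := by
    have hn : (n : ℝ) ≠ 0 := by
      have : (ℓ : ℝ) ≤ n := by exact_mod_cast hℓn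
      linarith
    simp [hF, div_self hn, expDoubleSum_zero_right]
  calc _ ≤ ∑ j ∈ Ico ℓ n, C * (F j - F (j + 1)) := sum_le_sum hstep
    _ = C * (F ℓ - F n) := by rw [← mul_sum, sum_Ico_sub_succ F hℓn]
    _ = _ := by rw [hFn, hC]; ring

end Weights

noncomputable def solvedBound (k n r ℓ : ℕ) : ℝ :=
  r * ℓ / ((k - 1) * n) - 1 / (k - 1) * ((ℓ : ℝ) / n) ^ k * expDoubleSum (k - 1) (log (n / ℓ)) r
    - 3 * k ^ 2 * r / ((k - 1) * n)

lemma div_mul_solvedBound_add_eq {k n : ℕ} (hk : 2 ≤ k) (hn : 0 < n) (r j : ℕ) :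
    ((k : ℝ) - 1) / (j + 1) * solvedBound k n r (j + 1) + 1 / n =
      (r + 1) / n - ((j + 1 : ℝ) / n) ^ k * expDoubleSum (k - 1) (log (n / (j + 1))) r / (j + 1)
        - 3 * k ^ 2 * r / n * (1 / (j + 1)) := by
  have hk1 : (k : ℝ) - 1 ≠ 0 := by
    have : (2 : ℝ) ≤ k := by exact_mod_cast hk
    linarith
  have hn' : (n : ℝ) ≠ 0 := by positivity
  simp only [solvedBound, Nat.cast_succ]
  field_simp
  ring

lemma solvedBound_succ_arith {K u N ρ p E σ₁ σ₂ σ₃ : ℝ} (hK : 1 < K) (hu : 0 < u)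
    (hρu : K * ρ ≤ u) (hN : 0 < N) (hρ : 0 ≤ ρ) (hp : 0 ≤ p)
    (hpE : p * E ≤ (ρ + 1) * (u / N))
    (h₁ : ((u - K) - N * p) / (K - 1) ≤ σ₁)
    (h₂ : σ₂ ≤ (1 + 2 * K / u) * p * ((E - (ρ + 1)) / (K - 1)))
    (h₃ : σ₃ ≤ 1 / u + 1 / K) :
    (ρ + 1) * u / ((K - 1) * N) - 1 / (K - 1) * p * E - 3 * K ^ 2 * (ρ + 1) / ((K - 1) * N) ≤
      (ρ + 1) / N * σ₁ - σ₂ - 3 * K ^ 2 * ρ / N * σ₃ := by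
  have hK1 : 0 < K - 1 := by linarith
  have hσ₁ : (ρ + 1) / N * (((u - K) - N * p) / (K - 1)) ≤ (ρ + 1) / N * σ₁ :=
    mul_le_mul_of_nonneg_left h₁ (by positivity)
  have hσ₃ : 3 * K ^ 2 * ρ / N * σ₃ ≤ 3 * K ^ 2 * ρ / N * (1 / u + 1 / K) :=
    mul_le_mul_of_nonneg_left h₃ (by positivity)
  have hX : 2 * K / u * (p * (E - (ρ + 1))) / (K - 1) ≤ 2 * K * (ρ + 1) / ((K - 1) * N) := by
    have : p * (E - (ρ + 1)) ≤ (ρ + 1) * (u / N) := by nlinarith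
    calc 2 * K / u * (p * (E - (ρ + 1))) / (K - 1)
        ≤ 2 * K / u * ((ρ + 1) * (u / N)) / (K - 1) := by gcongr
      _ = 2 * K * (ρ + 1) / ((K - 1) * N) := by field_simp
  have hgap : 0 ≤ 3 * K / N * (1 - K * ρ / u) :=
    mul_nonneg (by positivity) (sub_nonneg.2 ((div_le_one hu).2 hρu))
  have hid : (ρ + 1) / N * (((u - K) - N * p) / (K - 1))
        - ((1 + 2 * K / u) * p * ((E - (ρ + 1)) / (K - 1)))
        - 3 * K ^ 2 * ρ / N * (1 / u + 1 / K)
        - ((ρ + 1) * u / ((K - 1) * N) - 1 / (K - 1) * p * E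
          - 3 * K ^ 2 * (ρ + 1) / ((K - 1) * N))
      = 3 * K / N * (1 - K * ρ / u) +
          (2 * K * (ρ + 1) / ((K - 1) * N) - 2 * K / u * (p * (E - (ρ + 1))) / (K - 1)) := by
    field_simp; ring
  linarith

section Induction

variable {k n r ℓ : ℕ}

lemma solvedBound_succ_le (hk : 2 ≤ k) (hrk : r < k) (hℓ : k ^ 2 + k ≤ ℓ) (hℓn : ℓ ≤ n) :
    solvedBound k n (r + 1) ℓ ≤ ∑ j ∈ Ico ℓ n,
      secretaryWeight k ℓ j * (((k : ℝ) - 1) / (j + 1) * solvedBound k n r (j + 1) + 1 / n) := by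
  have h2k : 2 * k ≤ ℓ := by nlinarith
  have hn : 0 < n := by omega
  have hk' : (2 : ℝ) ≤ k := by exact_mod_cast hk
  have hℓ' : (0 : ℝ) < ℓ := by exact_mod_cast (by omega : 0 < ℓ)
  have hℓn' : (ℓ : ℝ) ≤ n := by exact_mod_cast hℓn
  have hρu : (k : ℝ) * r ≤ ℓ := by
    have : k * r ≤ ℓ := by nlinarith
    exact_mod_cast this
  have hsplit : ∀ (w T D : ℝ) (j : ℕ), w * ((r + 1) / n - T - D * (1 / (j + 1))) =
      (r + 1) / n * w - w * T - D * (w / (j + 1)) := by intros; ring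
  simp only [div_mul_solvedBound_add_eq hk hn r, hsplit, sum_sub_distrib, ← mul_sum]
  simp only [solvedBound, Nat.cast_succ]
  exact solvedBound_succ_arith (by linarith) hℓ' hρu (by positivity) (Nat.cast_nonneg r)
    (by positivity) (by exact_mod_cast pow_mul_expDoubleSum_log_le hℓ' hℓn' k (r + 1) (by omega))
    (sub_div_le_sum_secretaryWeight hk (by omega) hℓn)
    (sum_secretaryWeight_mul_expDoubleSum_le hk h2k hℓn r)
    (sum_secretaryWeight_div_le (by omega) (by omega) hℓn)

lemma solvedBound_succ_mul_le {G : ℕ → ℝ} {c : ℝ} (hc : 0 ≤ c) (hk : 2 ≤ k) (hrk : r < k)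
    (hℓ : k ^ 2 + k ≤ ℓ) (hℓn : ℓ ≤ n) (hGn : G (n + 1) = 0)
    (hG : ∀ j ∈ Ico ℓ n, solvedBound k n r (j + 1) * c ≤ G (j + 1)) :
    solvedBound k n (r + 1) ℓ * c ≤
      ∑ j ∈ Icc ℓ n, secretaryWeight k ℓ j * (((k : ℝ) - 1) / (j + 1) * G (j + 1) + c / n) := by
  have hkℓ : k < ℓ := by nlinarith
  have hk1 : (0 : ℝ) ≤ k - 1 := by
    have : (2 : ℝ) ≤ k := by exact_mod_cast hk
    linarith
  have hterm : ∀ j ∈ Ico ℓ n,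
      secretaryWeight k ℓ j * (((k : ℝ) - 1) / (j + 1) * solvedBound k n r (j + 1) + 1 / n) * c ≤
        secretaryWeight k ℓ j * (((k : ℝ) - 1) / (j + 1) * G (j + 1) + c / n) := by
    intro j hj
    rw [mul_assoc, add_mul, mul_assoc, one_div_mul_eq_div]
    gcongr
    · exact secretaryWeight_nonneg hkℓ (mem_Ico.1 hj).1
    · exact hG j hj
  have hlast : 0 ≤ secretaryWeight k ℓ n * (((k : ℝ) - 1) / (n + 1) * G (n + 1) + c / n) := by
    rw [hGn, mul_zero, zero_add]
    exact mul_nonneg (secretaryWeight_nonneg hkℓ hℓn) (by positivity)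
  calc solvedBound k n (r + 1) ℓ * c
      ≤ ∑ j ∈ Ico ℓ n, secretaryWeight k ℓ j *
          (((k : ℝ) - 1) / (j + 1) * solvedBound k n r (j + 1) + 1 / n) * c := by
        rw [← sum_mul]; gcongr; exact solvedBound_succ_le hk hrk hℓ hℓn
    _ ≤ ∑ j ∈ Ico ℓ n, secretaryWeight k ℓ j * (((k : ℝ) - 1) / (j + 1) * G (j + 1) + c / n) :=
        sum_le_sum hterm
    _ ≤ _ := by
        rw [← Ico_insert_right hℓn, sum_insert right_notMem_Ico]
        linarith

end Induction

/-- Lemma 3 of the paper: the solved recursion for the value obtained by the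
submodular secretary algorithm from round `ℓ` with remaining capacity `r`. -/
theorem secretary_solved_recursion (k n : ℕ) (hk : 2 ≤ k) (c : ℝ) (hc : 0 ≤ c)
    (g : ℕ → ℕ → ℝ)
    (hgn : ∀ r, g (n + 1) r = 0)
    (hgz : ∀ ℓ, g ℓ 0 ≥ 0)
    (hrec : ∀ ℓ r, k ^ 2 + k ≤ ℓ → ℓ ≤ n → 1 ≤ r → r ≤ k →
      g ℓ r ≥ ∑ j ∈ Finset.Icc ℓ n,
        (((ℓ : ℝ) - k) / ((j : ℝ) - k)) ^ k *
          (((k : ℝ) - 1) / ((j : ℝ) + 1) * g (j + 1) (r - 1) + c / n)) :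
    ∀ ℓ r, k ^ 2 + k ≤ ℓ → ℓ ≤ n → r ≤ k →
      g ℓ r ≥ ((r : ℝ) * ℓ / (((k : ℝ) - 1) * n)
        - 1 / ((k : ℝ) - 1) * ((ℓ : ℝ) / n) ^ k *
            ∑ r' ∈ Finset.range r, ∑ i ∈ Finset.range (r' + 1),
              ((k : ℝ) - 1) ^ i / (Nat.factorial i) *
                (Real.log ((n : ℝ) / ℓ)) ^ i
        - 3 * (k : ℝ) ^ 2 * r / (((k : ℝ) - 1) * n)) * c := by
  intro ℓ r
  induction r generalizing ℓ with
  | zero => intro _ _ _; simpa using hgz ℓ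
  | succ r ih =>
    intro hℓ hℓn hrk
    refine (solvedBound_succ_mul_le (G := (g · r)) hc hk hrk hℓ hℓn (hgn r) fun j hj => ?_).trans
      (hrec ℓ (r + 1) hℓ hℓn (by omega) hrk)
    obtain ⟨hℓj, hjn⟩ := mem_Ico.1 hj
    exact ih (j + 1) (hℓ.trans (hℓj.trans j.le_succ)) hjn (by omega)
end

section
/- For every natural number k ≥ 2, ∑_{r'=0}^{k−1} ∑_{i=0}^{r'} (k−1)^i / i! ≤ e^{k−1} − (k−1)^k / k! − (k−1)^{k+1} / (k+1)! + (k−1)^k / (k−1)!, where e is Euler's number and all arithmetic is over the real numbers. -/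
/-!
With `x = k - 1`, swapping the order of summation turns the double sum into
`∑_{i<k} (k - i) xⁱ / i!`. Writing `k - i = 1 + (x - i)`, the `(x - i)` part telescopes to
`xᵏ / (k - 1)!`, and the remaining partial sum `∑_{i<k} xⁱ / i!` is at most `eˣ` minus the two
next (nonnegative) terms of the series.
-/

open Finset Nat

theorem Finset.sum_range_sum_range_succ {R : Type*} [Ring R] (f : ℕ → R) (n : ℕ) :
    ∑ r ∈ range n, ∑ i ∈ range (r + 1), f i = ∑ i ∈ range n, ((n : R) - i) * f i := by
  induction n with
  | zero => simp
  | succ n ih =>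
    simp only [sum_range_succ _ n, ih, cast_add_one, add_sub_right_comm _ (1 : R), add_mul,
      one_mul, sub_self, zero_mul, zero_add, sum_add_distrib, add_assoc]

/-- The partial sums of `∑ (x - i) xⁱ / i!` telescope, since `(x - i) xⁱ / i! = g (i + 1) - g i`
for `g i = i xⁱ / i!`. -/
theorem Real.sum_range_sub_mul_pow_div_factorial (x : ℝ) (n : ℕ) :
    ∑ i ∈ range (n + 1), (x - i) * (x ^ i / i !) = x ^ (n + 1) / n ! := by
  induction n with
  | zero => simp
  | succ n ih =>
    rw [sum_range_succ, ih, factorial_succ]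
    push_cast
    field_simp
    ring

/-- Upper bound on the double sum via truncation of the exponential series. -/
theorem double_sum_le_exp (k : ℕ) (hk : 2 ≤ k) :
    ∑ r' ∈ Finset.range k, ∑ i ∈ Finset.range (r' + 1),
        ((k : ℝ) - 1) ^ i / (Nat.factorial i) ≤
      Real.exp ((k : ℝ) - 1) - ((k : ℝ) - 1) ^ k / (Nat.factorial k)
        - ((k : ℝ) - 1) ^ (k + 1) / (Nat.factorial (k + 1))
        + ((k : ℝ) - 1) ^ k / (Nat.factorial (k - 1)) := by
  obtain ⟨n, rfl⟩ : ∃ n, k = n + 1 := ⟨k - 1, by omega⟩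
  set x : ℝ := ((n + 1 : ℕ) : ℝ) - 1 with hx
  have hx_nonneg : 0 ≤ x := by simp [hx]
  have h_exp := Real.sum_le_exp_of_nonneg hx_nonneg (n + 1 + 2)
  rw [sum_range_succ, sum_range_succ] at h_exp
  calc ∑ r ∈ range (n + 1), ∑ i ∈ range (r + 1), x ^ i / i !
      = ∑ i ∈ range (n + 1), (x ^ i / i ! + (x - i) * (x ^ i / i !)) := by
        rw [sum_range_sum_range_succ]
        refine sum_congr rfl fun i _ => ?_
        rw [hx]
        ring
    _ = ∑ i ∈ range (n + 1), x ^ i / i ! + x ^ (n + 1) / (n + 1 - 1) ! := by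
        rw [sum_add_distrib, Real.sum_range_sub_mul_pow_div_factorial, Nat.add_sub_cancel]
    _ ≤ _ := by linarith
end

section
/- Let k ≥ 1 and n be natural numbers, let c : ℕ → ℝ be nonnegative, and let g : ℕ × ℕ → ℝ be nonnegative and satisfy: g(ℓ, 0) = 0 for all ℓ; g(n+1, r) = 0 for all r; and g(ℓ, r) ≥ (1/ℓ)·( c(ℓ) + (k−1)·g(ℓ+1, r−1) + (ℓ−k)·g(ℓ+1, r) ) for all ℓ with k < ℓ ≤ n and all r ≥ 1. Then for all ℓ with k < ℓ ≤ n and all r, g(ℓ, r) ≥ ∑_{j=ℓ}^{n} (a(ℓ, j−1)/j) · c(j) · ∑_{r'=0}^{r−1} ∑_{M ⊆ {ℓ, …, j−1}, |M| = r'} ∏_{i ∈ M} (k−1)/i, where a(ℓ, j−1) = ∏_{i=ℓ}^{j−1} (1 − k/i) (empty product equal to 1), the middle sum ranges over all subsets M of the integer interval {ℓ, …, j−1} of cardinality r', and all arithmetic is over the real numbers. -/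
/-!
Write `S(ℓ, r)` (`unfoldedBound`) for the right-hand side. Splitting off the term `j = ℓ` of the
outer sum, and the index `i = ℓ` from the product and from the sets `M`, gives the exact identity
`S(ℓ, r+1) = c(ℓ)/ℓ + (1 - k/ℓ) · (S(ℓ+1, r+1) + (k-1)/ℓ · S(ℓ+1, r))`.
Since `0 ≤ 1 - k/ℓ ≤ 1`, this makes `S` a subsolution of the recursion satisfied by `g`; as `S`
vanishes for `r = 0` and for `ℓ > n` while `g ≥ 0`, downward induction on `ℓ` gives `S ≤ g`.
-/

open Finset

theorem Multiset.esymm_cons_succ {R : Type*} [CommSemiring R] (a : R) (s : Multiset R) (n : ℕ) :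
    (a ::ₘ s).esymm (n + 1) = s.esymm (n + 1) + a * s.esymm n := by
  simp [Multiset.esymm, Multiset.powersetCard_cons, Multiset.map_map, Multiset.sum_map_mul_left]

theorem Finset.sum_powersetCard_succ_insert_prod {α R : Type*} [DecidableEq α] [CommSemiring R]
    (f : α → R) {x : α} {s : Finset α} (hx : x ∉ s) (n : ℕ) :
    ∑ M ∈ (insert x s).powersetCard (n + 1), ∏ i ∈ M, f i =
      ∑ M ∈ s.powersetCard (n + 1), ∏ i ∈ M, f i + f x * ∑ M ∈ s.powersetCard n, ∏ i ∈ M, f i := by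
  simp only [← Finset.esymm_map_val, insert_val_of_notMem hx, Multiset.map_cons,
    Multiset.esymm_cons_succ]

section TruncEsymm

variable {α R : Type*}

noncomputable def truncEsymm [CommSemiring R] (f : α → R) (s : Finset α) (r : ℕ) : R :=
  ∑ r' ∈ range r, ∑ M ∈ s.powersetCard r', ∏ i ∈ M, f i

@[simp]
theorem truncEsymm_zero [CommSemiring R] (f : α → R) (s : Finset α) : truncEsymm f s 0 = 0 := by
  simp [truncEsymm]

theorem truncEsymm_empty_succ [CommSemiring R] (f : α → R) (r : ℕ) :
    truncEsymm f ∅ (r + 1) = 1 := by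
  have h (r' : ℕ) : (∅ : Finset α).powersetCard (r' + 1) = ∅ := powersetCard_eq_empty.mpr (by simp)
  simp [truncEsymm, sum_range_succ', h]

theorem truncEsymm_insert_succ [DecidableEq α] [CommSemiring R] (f : α → R) {x : α}
    {s : Finset α} (hx : x ∉ s) (r : ℕ) :
    truncEsymm f (insert x s) (r + 1) = truncEsymm f s (r + 1) + f x * truncEsymm f s r := by
  simp only [truncEsymm, sum_range_succ' _ r, sum_powersetCard_succ_insert_prod f hx,
    sum_add_distrib, mul_sum, powersetCard_zero, sum_singleton, prod_empty]
  ring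

theorem truncEsymm_nonneg [CommSemiring R] [PartialOrder R] [IsOrderedRing R] {f : α → R}
    {s : Finset α} (hf : ∀ i ∈ s, 0 ≤ f i) (r : ℕ) : 0 ≤ truncEsymm f s r :=
  sum_nonneg fun _ _ => sum_nonneg fun _ hM =>
    prod_nonneg fun i hi => hf i ((mem_powersetCard.mp hM).1 hi)

end TruncEsymm

section UnfoldedBound

variable {k n : ℕ} {c : ℕ → ℝ}

noncomputable def unfoldedBound (k n : ℕ) (c : ℕ → ℝ) (ℓ r : ℕ) : ℝ :=
  ∑ j ∈ Icc ℓ n, (∏ i ∈ Ico ℓ j, (1 - (k : ℝ) / i)) / j * c j *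
    truncEsymm (fun i : ℕ => ((k : ℝ) - 1) / i) (Ico ℓ j) r

theorem unfoldedBound_zero_right (ℓ : ℕ) : unfoldedBound k n c ℓ 0 = 0 := by
  simp [unfoldedBound]

theorem unfoldedBound_of_lt {ℓ : ℕ} (hnℓ : n < ℓ) (r : ℕ) : unfoldedBound k n c ℓ r = 0 := by
  simp [unfoldedBound, Icc_eq_empty_of_lt hnℓ]

theorem unfoldedBound_nonneg (hk : 1 ≤ k) (hc : ∀ j, 0 ≤ c j) {ℓ : ℕ} (hkℓ : k ≤ ℓ) (r : ℕ) :
    0 ≤ unfoldedBound k n c ℓ r := by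
  have hk' : (0 : ℝ) ≤ k - 1 := sub_nonneg.mpr (Nat.one_le_cast.mpr hk)
  refine sum_nonneg fun j _ => mul_nonneg (mul_nonneg (div_nonneg ?_ j.cast_nonneg) (hc j)) ?_
  · refine prod_nonneg fun i hi => sub_nonneg.mpr (div_le_one_of_le₀ ?_ i.cast_nonneg)
    exact_mod_cast hkℓ.trans (mem_Ico.mp hi).1
  · exact truncEsymm_nonneg (fun i _ => div_nonneg hk' i.cast_nonneg) r

theorem unfoldedBound_succ {ℓ : ℕ} (hℓn : ℓ ≤ n) (r : ℕ) :
    unfoldedBound k n c ℓ (r + 1) = c ℓ / ℓ + (1 - (k : ℝ) / ℓ) *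
      (unfoldedBound k n c (ℓ + 1) (r + 1)
        + ((k : ℝ) - 1) / ℓ * unfoldedBound k n c (ℓ + 1) r) := by
  rw [unfoldedBound, ← insert_Icc_add_one_left_eq_Icc hℓn, sum_insert (by simp), Ico_self,
    prod_empty, truncEsymm_empty_succ, unfoldedBound, unfoldedBound, mul_sum, ← sum_add_distrib,
    mul_sum]
  congr 1
  · ring
  refine sum_congr rfl fun j hj => ?_
  rw [← insert_Ico_add_one_left_eq_Ico (Order.add_one_le_iff.mp (mem_Icc.mp hj).1),
    prod_insert (by simp), truncEsymm_insert_succ _ (by simp)]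
  ring

theorem unfoldedBound_succ_le (hk : 1 ≤ k) (hc : ∀ j, 0 ≤ c j) {ℓ : ℕ} (hkℓ : k < ℓ)
    (hℓn : ℓ ≤ n) (r : ℕ) :
    unfoldedBound k n c ℓ (r + 1) ≤
      1 / (ℓ : ℝ) * (c ℓ + ((k : ℝ) - 1) * unfoldedBound k n c (ℓ + 1) r
        + ((ℓ : ℝ) - k) * unfoldedBound k n c (ℓ + 1) (r + 1)) := by
  have hℓ : (ℓ : ℝ) ≠ 0 := by exact_mod_cast (by omega : ℓ ≠ 0)
  have hk' : (0 : ℝ) ≤ k - 1 := sub_nonneg.mpr (Nat.one_le_cast.mpr hk)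
  set A := unfoldedBound k n c (ℓ + 1) (r + 1)
  set B := unfoldedBound k n c (ℓ + 1) r
  have hB : 0 ≤ B := unfoldedBound_nonneg hk hc (by omega) r
  have hgap : 1 / (ℓ : ℝ) * (c ℓ + (k - 1) * B + (ℓ - k) * A) -
      (c ℓ / ℓ + (1 - (k : ℝ) / ℓ) * (A + (k - 1) / ℓ * B)) = k / ℓ * ((k - 1) / ℓ * B) := by
    field_simp
    ring
  have hgap_nonneg := mul_nonneg (div_nonneg k.cast_nonneg ℓ.cast_nonneg)
    (mul_nonneg (div_nonneg hk' ℓ.cast_nonneg) hB)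
  rw [unfoldedBound_succ hℓn]
  linarith

theorem unfoldedBound_le (hk : 1 ≤ k) (hc : ∀ j, 0 ≤ c j) {g : ℕ → ℕ → ℝ}
    (hg : ∀ ℓ r, 0 ≤ g ℓ r)
    (hrec : ∀ ℓ r, k < ℓ → ℓ ≤ n → 1 ≤ r →
      g ℓ r ≥ 1 / (ℓ : ℝ) *
        (c ℓ + ((k : ℝ) - 1) * g (ℓ + 1) (r - 1) + ((ℓ : ℝ) - k) * g (ℓ + 1) r))
    (ℓ r : ℕ) (hkℓ : k < ℓ) : unfoldedBound k n c ℓ r ≤ g ℓ r := by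
  induction h : n + 1 - ℓ generalizing ℓ r with
  | zero => exact (unfoldedBound_of_lt (by omega) r).trans_le (hg ℓ r)
  | succ d ih =>
    obtain _ | r := r
    · exact (unfoldedBound_zero_right ℓ).trans_le (hg ℓ 0)
    have hℓn : ℓ ≤ n := by omega
    have ih' : ∀ r, unfoldedBound k n c (ℓ + 1) r ≤ g (ℓ + 1) r :=
      fun r => ih (ℓ + 1) r (by omega) (by omega)
    have hk' : (0 : ℝ) ≤ k - 1 := sub_nonneg.mpr (Nat.one_le_cast.mpr hk)
    have hℓk : (0 : ℝ) ≤ ℓ - k := sub_nonneg.mpr (by exact_mod_cast hkℓ.le)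
    calc unfoldedBound k n c ℓ (r + 1)
        ≤ 1 / (ℓ : ℝ) * (c ℓ + ((k : ℝ) - 1) * unfoldedBound k n c (ℓ + 1) r
          + ((ℓ : ℝ) - k) * unfoldedBound k n c (ℓ + 1) (r + 1)) :=
          unfoldedBound_succ_le hk hc hkℓ hℓn r
      _ ≤ 1 / (ℓ : ℝ) *
          (c ℓ + ((k : ℝ) - 1) * g (ℓ + 1) r + ((ℓ : ℝ) - k) * g (ℓ + 1) (r + 1)) := by
          gcongr <;> exact ih' _
      _ ≤ g ℓ (r + 1) := hrec ℓ (r + 1) hkℓ hℓn r.succ_pos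

end UnfoldedBound

theorem recursion_unfolding_general (k n : ℕ) (hk : 1 ≤ k) (c : ℕ → ℝ)
    (hc : ∀ j, 0 ≤ c j) (g : ℕ → ℕ → ℝ) (hg : ∀ ℓ r, 0 ≤ g ℓ r)
    (hrec : ∀ ℓ r, k < ℓ → ℓ ≤ n → 1 ≤ r →
      g ℓ r ≥ 1 / (ℓ : ℝ) *
        (c ℓ + ((k : ℝ) - 1) * g (ℓ + 1) (r - 1) + ((ℓ : ℝ) - k) * g (ℓ + 1) r)) :
    ∀ ℓ r, k < ℓ → ℓ ≤ n →
      g ℓ r ≥ ∑ j ∈ Finset.Icc ℓ n,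
        (∏ i ∈ Finset.Ico ℓ j, (1 - (k : ℝ) / i)) / j * c j *
          ∑ r' ∈ Finset.range r,
            ∑ M ∈ (Finset.Ico ℓ j).powersetCard r',
              ∏ i ∈ M, ((k : ℝ) - 1) / i :=
  fun ℓ r hkℓ _ => unfoldedBound_le hk hc hg hrec ℓ r hkℓ

/-- Claim 1 of the paper: unfolding the recursion of Lemma 2. -/
theorem recursion_unfolding (k n : ℕ) (hk : 1 ≤ k) (c : ℕ → ℝ)
    (hc : ∀ j, 0 ≤ c j) (g : ℕ → ℕ → ℝ) (hg : ∀ ℓ r, 0 ≤ g ℓ r)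
    (hg0 : ∀ ℓ, g ℓ 0 = 0) (hgn : ∀ r, g (n + 1) r = 0)
    (hrec : ∀ ℓ r, k < ℓ → ℓ ≤ n → 1 ≤ r →
      g ℓ r ≥ 1 / (ℓ : ℝ) *
        (c ℓ + ((k : ℝ) - 1) * g (ℓ + 1) (r - 1) + ((ℓ : ℝ) - k) * g (ℓ + 1) r)) :
    ∀ ℓ r, k < ℓ → ℓ ≤ n →
      g ℓ r ≥ ∑ j ∈ Finset.Icc ℓ n,
        (∏ i ∈ Finset.Ico ℓ j, (1 - (k : ℝ) / i)) / j * c j *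
          ∑ r' ∈ Finset.range r,
            ∑ M ∈ (Finset.Ico ℓ j).powersetCard r',
              ∏ i ∈ M, ((k : ℝ) - 1) / i :=
  recursion_unfolding_general k n hk c hc g hg hrec
end

section
/- Let k ≥ 1, ℓ, and r be natural numbers with ℓ ≥ k + 1, and for each natural number j ≥ ℓ define t(j) = ( ∏_{i=ℓ}^{j−1} (1 − k/i) ) · ∑_{r'=0}^{r−1} ∑_{M ⊆ {ℓ, …, j−1}, |M| = r'} ∏_{i ∈ M} (k−1)/i, where the subset sum ranges over all subsets M of the integer interval {ℓ, …, j−1} of cardinality r', empty products equal 1, and all arithmetic is over the real numbers. Then the sequence t(j) is non-increasing in j, i.e. t(j+1) ≤ t(j) for all j ≥ ℓ. -/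
/-!
Write `x i = (k - 1) / i`; the double sum in `t j` is the truncated elementary symmetric sum
`∑_{n < r} e_n` of the values `x i`, `ℓ ≤ i < j`. Passing from `j` to `j + 1` multiplies the
product by `1 - k / j`, and, because `e_{n+1}(x_j :: s) = e_{n+1}(s) + x_j e_n(s)` with all terms
nonnegative, multiplies the truncated sum by at most `1 + x_j`. Finally
`(1 - k / j) (1 + (k - 1) / j) = 1 - (j + k (k - 1)) / j² ≤ 1`.
-/

open Finset

namespace Multiset

variable {R : Type*} [CommSemiring R]

@[simp]
theorem esymm_zero (s : Multiset R) : s.esymm 0 = 1 := by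
  simp [esymm]

theorem esymm_cons_succ_s14 (a : R) (s : Multiset R) (n : ℕ) :
    (a ::ₘ s).esymm (n + 1) = s.esymm (n + 1) + a * s.esymm n := by
  simp [esymm, powersetCard_cons, map_map, sum_map_mul_left]

theorem sum_range_succ_esymm_cons (a : R) (s : Multiset R) (r : ℕ) :
    ∑ n ∈ Finset.range (r + 1), (a ::ₘ s).esymm n
      = ∑ n ∈ Finset.range (r + 1), s.esymm n + a * ∑ n ∈ Finset.range r, s.esymm n := by
  rw [Finset.sum_range_succ', Finset.sum_range_succ']
  simp only [esymm_cons_succ_s14, Finset.sum_add_distrib, Finset.mul_sum, esymm_zero]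
  ring

variable [PartialOrder R] [IsOrderedRing R]

theorem esymm_nonneg {s : Multiset R} (hs : ∀ a ∈ s, 0 ≤ a) (n : ℕ) : 0 ≤ s.esymm n :=
  sum_nonneg fun _ hM ↦ by
    obtain ⟨t, ht, rfl⟩ := mem_map.1 hM
    exact prod_nonneg fun a ha ↦ hs a (mem_of_le (mem_powersetCard.1 ht).1 ha)

theorem sum_range_esymm_cons_le {a : R} {s : Multiset R} (ha : 0 ≤ a) (hs : ∀ b ∈ s, 0 ≤ b)
    (r : ℕ) :
    ∑ n ∈ Finset.range r, (a ::ₘ s).esymm n ≤ (1 + a) * ∑ n ∈ Finset.range r, s.esymm n := by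
  cases r with
  | zero => simp
  | succ r =>
    have hmono : ∑ n ∈ Finset.range r, s.esymm n ≤ ∑ n ∈ Finset.range (r + 1), s.esymm n :=
      sum_le_sum_of_subset_of_nonneg (Finset.range_subset_range.2 r.le_succ)
        fun n _ _ ↦ esymm_nonneg hs n
    rw [sum_range_succ_esymm_cons, add_mul, one_mul]
    gcongr

end Multiset

theorem Finset.prod_mul_sum_esymm_insert_le {ι R : Type*} [DecidableEq ι] [CommSemiring R]
    [PartialOrder R] [IsOrderedRing R] {c x : ι → R} {s : Finset ι} {j : ι} (hj : j ∉ s)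
    (hc : ∀ i ∈ insert j s, 0 ≤ c i) (hx : ∀ i ∈ insert j s, 0 ≤ x i)
    (hcx : c j * (1 + x j) ≤ 1) (r : ℕ) :
    (∏ i ∈ insert j s, c i) *
        ∑ n ∈ Finset.range r, ∑ M ∈ (insert j s).powersetCard n, ∏ i ∈ M, x i
      ≤ (∏ i ∈ s, c i) * ∑ n ∈ Finset.range r, ∑ M ∈ s.powersetCard n, ∏ i ∈ M, x i := by
  simp only [← esymm_map_val, insert_val_of_notMem hj, Multiset.map_cons, prod_insert hj]
  have hxs : ∀ b ∈ s.val.map x, 0 ≤ b := by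
    simp only [Multiset.mem_map, mem_val]
    rintro _ ⟨i, hi, rfl⟩
    exact hx i (mem_insert_of_mem hi)
  have hcs : 0 ≤ ∏ i ∈ s, c i := prod_nonneg fun i hi ↦ hc i (mem_insert_of_mem hi)
  have hS : 0 ≤ ∑ n ∈ Finset.range r, (s.val.map x).esymm n :=
    sum_nonneg fun n _ ↦ Multiset.esymm_nonneg hxs n
  calc c j * (∏ i ∈ s, c i) * ∑ n ∈ Finset.range r, (x j ::ₘ s.val.map x).esymm n
      ≤ c j * (∏ i ∈ s, c i) * ((1 + x j) * ∑ n ∈ Finset.range r, (s.val.map x).esymm n) := by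
        gcongr
        · exact mul_nonneg (hc j (mem_insert_self j s)) hcs
        · exact Multiset.sum_range_esymm_cons_le (hx j (mem_insert_self j s)) hxs r
    _ = c j * (1 + x j) * ((∏ i ∈ s, c i) * ∑ n ∈ Finset.range r, (s.val.map x).esymm n) := by
        ring
    _ ≤ (∏ i ∈ s, c i) * ∑ n ∈ Finset.range r, (s.val.map x).esymm n :=
        mul_le_of_le_one_left (mul_nonneg hcs hS) hcx

theorem one_sub_div_mul_one_add_sub_one_div_le_one {k j : ℝ} (hk : 1 ≤ k) (hj : 0 < j) :
    (1 - k / j) * (1 + (k - 1) / j) ≤ 1 := by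
  have hexpand : (1 - k / j) * (1 + (k - 1) / j) = 1 - (j + k * (k - 1)) / j ^ 2 := by
    field_simp
    ring
  rw [hexpand, sub_le_self_iff]
  have : 0 ≤ k * (k - 1) := mul_nonneg (by linarith) (by linarith)
  positivity

/-- Claim 2 of the paper: the coefficients `t j` are non-increasing in `j`. -/
theorem coefficients_nonincreasing (k ℓ r : ℕ) (hk : 1 ≤ k) (hl : k + 1 ≤ ℓ)
    (t : ℕ → ℝ)
    (ht : ∀ j, t j = (∏ i ∈ Finset.Ico ℓ j, (1 - (k : ℝ) / i)) *
      ∑ r' ∈ Finset.range r,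
        ∑ M ∈ (Finset.Ico ℓ j).powersetCard r',
          ∏ i ∈ M, ((k : ℝ) - 1) / i) :
    ∀ j, ℓ ≤ j → t (j + 1) ≤ t j := by
  intro j hj
  have hk' : (1 : ℝ) ≤ k := by exact_mod_cast hk
  rw [ht, ht, Nat.Ico_succ_right_eq_insert_Ico hj]
  refine prod_mul_sum_esymm_insert_le (by simp) (fun i hi ↦ ?_) (fun i _ ↦ by positivity)
    (one_sub_div_mul_one_add_sub_one_div_le_one hk' (by exact_mod_cast (by omega : 0 < j))) r
  have hki : k < i := by
    simp only [mem_insert, mem_Ico] at hi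
    omega
  rw [sub_nonneg, div_le_one (by exact_mod_cast (by omega : 0 < i))]
  exact_mod_cast hki.le
end

section
/- Let n and s be natural numbers with 2 ≤ s ≤ n, let c ≥ 0 be a real number, and let g : ℕ → ℝ satisfy g(n+1) = 0 and g(ℓ) ≥ (c/n)·((s−1)/(ℓ−1)) + (1 − 1/ℓ)·g(ℓ+1) for all ℓ with s ≤ ℓ ≤ n. Then for all ℓ with s ≤ ℓ ≤ n, g(ℓ) ≥ (1/ℓ − 1/n)·(ℓ−1)·((s−1)/n)·c. -/
/-- The recursion from the analysis of submodular bipartite online matching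
(Theorem 3 of the paper). -/
theorem matching_recursion (n s : ℕ) (hs : 2 ≤ s) (hsn : s ≤ n) (c : ℝ)
    (hc : 0 ≤ c) (g : ℕ → ℝ) (hg0 : g (n + 1) = 0)
    (hrec : ∀ ℓ, s ≤ ℓ → ℓ ≤ n →
      g ℓ ≥ c / n * (((s : ℝ) - 1) / ((ℓ : ℝ) - 1)) + (1 - 1 / (ℓ : ℝ)) * g (ℓ + 1)) :
    ∀ ℓ, s ≤ ℓ → ℓ ≤ n →
      g ℓ ≥ (1 / (ℓ : ℝ) - 1 / (n : ℝ)) * ((ℓ : ℝ) - 1) * (((s : ℝ) - 1) / n) * c := by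
  have hS : (1:ℝ) ≤ (s:ℝ) - 1 := by
    have : (2:ℝ) ≤ (s:ℝ) := by exact_mod_cast hs
    linarith
  have base : ∀ ℓ, s ≤ ℓ → ℓ = n →
      g ℓ ≥ (1 / (ℓ : ℝ) - 1 / (n : ℝ)) * ((ℓ : ℝ) - 1) * (((s : ℝ) - 1) / n) * c := by
    intro ℓ h1 h2
    subst h2
    have h := hrec ℓ h1 le_rfl
    rw [hg0] at h
    have hA : (2:ℝ) ≤ (ℓ:ℝ) := by exact_mod_cast hs.trans h1
    have hpos : (0:ℝ) ≤ c / ℓ * (((s:ℝ)-1)/((ℓ:ℝ)-1)) := by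
      apply mul_nonneg (div_nonneg hc (by linarith))
      exact div_nonneg (by linarith) (by linarith)
    have hz : (1 / (ℓ:ℝ) - 1 / (ℓ:ℝ)) * ((ℓ : ℝ) - 1) * (((s : ℝ) - 1) / ℓ) * c = 0 := by
      ring
    rw [hz]
    linarith
  suffices H : ∀ k, ∀ ℓ, s ≤ ℓ → ℓ ≤ n → n - ℓ ≤ k →
      g ℓ ≥ (1 / (ℓ : ℝ) - 1 / (n : ℝ)) * ((ℓ : ℝ) - 1) * (((s : ℝ) - 1) / n) * c by
    intro ℓ h1 h2
    exact H (n - ℓ) ℓ h1 h2 le_rfl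
  intro k
  induction k with
  | zero =>
    intro ℓ h1 h2 h3
    exact base ℓ h1 (by omega)
  | succ k ih =>
    intro ℓ h1 h2 h3
    by_cases hln : ℓ = n
    · exact base ℓ h1 hln
    · have hlt : ℓ < n := lt_of_le_of_ne h2 hln
      have h2' := ih (ℓ + 1) (by omega) (by omega) (by omega)
      push_cast at h2'
      have h := hrec ℓ h1 h2
      have hA : (2:ℝ) ≤ (ℓ:ℝ) := by exact_mod_cast hs.trans h1
      have hN : (ℓ:ℝ) + 1 ≤ (n:ℝ) := by exact_mod_cast hlt
      have hcoef : (0:ℝ) ≤ 1 - 1 / (ℓ:ℝ) := by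
        have : 1 / (ℓ:ℝ) ≤ 1 := by
          rw [div_le_one (by linarith)]; linarith
        linarith
      have hmul : (1 - 1/(ℓ:ℝ)) * g (ℓ+1) ≥
          (1 - 1/(ℓ:ℝ)) * ((1/((ℓ:ℝ)+1) - 1/n) * ((ℓ:ℝ)+1-1) * (((s:ℝ)-1)/n) * c) :=
        mul_le_mul_of_nonneg_left h2' hcoef
      have key : c/n * (((s:ℝ)-1)/((ℓ:ℝ)-1)) +
          (1 - 1/(ℓ:ℝ)) * ((1/((ℓ:ℝ)+1) - 1/n) * ((ℓ:ℝ)+1-1) * (((s:ℝ)-1)/n) * c) ≥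
          (1/(ℓ:ℝ) - 1/n) * ((ℓ:ℝ)-1) * (((s:ℝ)-1)/n) * c := by
        rw [ge_iff_le, ← sub_nonneg]
        have heq : c/n * (((s:ℝ)-1)/((ℓ:ℝ)-1)) +
            (1 - 1/(ℓ:ℝ)) * ((1/((ℓ:ℝ)+1) - 1/n) * ((ℓ:ℝ)+1-1) * (((s:ℝ)-1)/n) * c) -
            (1/(ℓ:ℝ) - 1/n) * ((ℓ:ℝ)-1) * (((s:ℝ)-1)/n) * c =
            c * ((s:ℝ)-1) * (3*(ℓ:ℝ) - 1) / ((n:ℝ) * ((ℓ:ℝ)-1) * (ℓ:ℝ) * ((ℓ:ℝ)+1)) := by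
          have h1 : ((ℓ:ℝ)-1) ≠ 0 := by linarith
          have h2 : (ℓ:ℝ) ≠ 0 := by linarith
          have h3 : ((ℓ:ℝ)+1) ≠ 0 := by linarith
          have h4 : (n:ℝ) ≠ 0 := by linarith
          field_simp
          ring
        rw [heq]
        apply div_nonneg
        · apply mul_nonneg (mul_nonneg hc (by linarith)) (by linarith)
        · have : (0:ℝ) < (n:ℝ) * ((ℓ:ℝ)-1) * (ℓ:ℝ) * ((ℓ:ℝ)+1) := by
            apply mul_pos (mul_pos (mul_pos (by linarith) (by linarith)) (by linarith))
            linarith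
          linarith
      linarith
end

section
/- Let d, B, b be real numbers with d ≥ 1, B ≥ 2, and b ≥ B. Set ψ = d^{1/(B−1)} and δ = 4·e·ψ·(1 − 1/b) − 1, where e is Euler's number. Then ( e^δ / (1+δ)^{1+δ} )^{b/(4eψ)} ≤ 1/(2d). -/
/-!
Bounding `e^δ` by `e^(1+δ)` turns the Chernoff expression into `(e/(1+δ))^((1+δ)t)` with
`t = b/(4eψ)`. The choice of `δ` makes the exponent `(1+δ)t` equal to `b - 1`, and since `b ≥ 2`
it also gives `1+δ ≥ 2eψ`, so the bound is at most `(2ψ)^(-(b-1)) ≤ 2⁻¹ ψ^(-(B-1)) = 1/(2d)`.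
-/

open Real

lemma exp_div_rpow_self_le_exp_one_div_rpow {x : ℝ} (hx : 0 < 1 + x) :
    exp x / (1 + x) ^ (1 + x) ≤ (exp 1 / (1 + x)) ^ (1 + x) := by
  rw [div_rpow (exp_pos 1).le hx.le, exp_one_rpow]
  gcongr
  linarith

lemma chernoff_rpow_le_exp_one_div_rpow {x t : ℝ} (hx : 0 < 1 + x) (ht : 0 ≤ t) :
    (exp x / (1 + x) ^ (1 + x)) ^ t ≤ (exp 1 / (1 + x)) ^ ((1 + x) * t) := by
  rw [rpow_mul (by positivity)]
  exact rpow_le_rpow (by positivity) (exp_div_rpow_self_le_exp_one_div_rpow hx) ht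

lemma inv_two_mul_rpow_le {ψ a c : ℝ} (hψ : 1 ≤ ψ) (ha : 1 ≤ a) (hac : a ≤ c) :
    (2 * ψ)⁻¹ ^ c ≤ (2 * ψ ^ a)⁻¹ := by
  have hψ0 : 0 < ψ := by linarith
  have h2 : (2 : ℝ)⁻¹ ^ c ≤ 2⁻¹ := by
    simpa using rpow_le_rpow_of_exponent_ge (x := (2 : ℝ)⁻¹) (by norm_num) (by norm_num)
      (ha.trans hac)
  have hψc : ψ⁻¹ ^ c ≤ (ψ ^ a)⁻¹ := by
    rw [← inv_rpow hψ0.le]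
    exact rpow_le_rpow_of_exponent_ge (by positivity) (inv_le_one_of_one_le₀ hψ) hac
  rw [mul_inv, mul_inv, mul_rpow (by norm_num) (by positivity)]
  exact mul_le_mul h2 hψc (by positivity) (by norm_num)

/-- The Chernoff-tail computation of Lemma 8 of the paper (unknown parameters). -/
theorem chernoff_tail_unknown (d B b : ℝ) (hd : 1 ≤ d) (hB : 2 ≤ B) (hb : B ≤ b)
    (ψ δ : ℝ) (hψ : ψ = d ^ (1 / (B - 1)))
    (hδ : δ = 4 * Real.exp 1 * ψ * (1 - 1 / b) - 1) :
    (Real.exp δ / (1 + δ) ^ (1 + δ)) ^ (b / (4 * Real.exp 1 * ψ)) ≤ 1 / (2 * d) := by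
  have hψ1 : 1 ≤ ψ := hψ ▸ one_le_rpow hd (by simp only [one_div, inv_nonneg]; linarith)
  have hd_eq : ψ ^ (B - 1) = d := by
    rw [hψ, one_div, rpow_inv_rpow (by linarith) (by linarith)]
  have hψ0 : 0 < ψ := by linarith
  have hb0 : 0 < b := by linarith
  have hb_inv : 1 / b ≤ 1 / 2 := one_div_le_one_div_of_le (by norm_num) (by linarith)
  have h1δ : 2 * exp 1 * ψ ≤ 1 + δ := by
    rw [hδ]
    nlinarith [mul_pos (exp_pos 1) hψ0]
  have hδ0 : 0 < 1 + δ := lt_of_lt_of_le (by positivity) h1δ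
  have hexponent : (1 + δ) * (b / (4 * exp 1 * ψ)) = b - 1 := by
    rw [hδ]; field_simp; ring
  calc (exp δ / (1 + δ) ^ (1 + δ)) ^ (b / (4 * exp 1 * ψ))
      ≤ (exp 1 / (1 + δ)) ^ (b - 1) :=
        hexponent ▸ chernoff_rpow_le_exp_one_div_rpow hδ0 (by positivity)
    _ ≤ (2 * ψ)⁻¹ ^ (b - 1) := by
        gcongr
        · linarith
        · rw [div_le_iff₀ hδ0, ← div_eq_inv_mul, le_div_iff₀ (by positivity)]
          linarith
    _ ≤ (2 * ψ ^ (B - 1))⁻¹ := inv_two_mul_rpow_le hψ1 (by linarith) (by linarith)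
    _ = 1 / (2 * d) := by rw [hd_eq, one_div]
end

section
/- Let d, B, b be real numbers with d ≥ 1, B ≥ 2, and b ≥ B. Set p = 1 − (1/(2e))·(1/(2d))^{1/(B−1)} and let δ be defined by (1+δ)·(1−p)·b = b − 1, where e is Euler's number. Then ( e^δ / (1+δ)^{1+δ} )^{(1−p)·b} ≤ 1/(2d). -/
/-!
Write `μ = (1 - p) b` for the mean, so that `(1 + δ) μ = b - 1`. Since `δ μ ≤ (1 + δ) μ`, the
Chernoff expression is at most `(e / (1 + δ)) ^ (b - 1) = (e μ / (b - 1)) ^ (b - 1)`. The choice of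
`p` makes `e (1 - p) = r / 2` with `r = (1 / (2d)) ^ (1 / (B - 1))`, and `b / (b - 1) ≤ 2` for
`b ≥ 2`, so the bound is at most `r ^ (b - 1) = (1 / (2d)) ^ ((b - 1) / (B - 1)) ≤ 1 / (2d)`.
-/

open Real

theorem chernoff_tail_le_exp_one_div_rpow {δ μ : ℝ} (hδ : 0 < 1 + δ) (hμ : 0 ≤ μ) :
    (exp δ / (1 + δ) ^ (1 + δ)) ^ μ ≤ (exp 1 / (1 + δ)) ^ ((1 + δ) * μ) := by
  rw [div_rpow (exp_pos δ).le (rpow_nonneg hδ.le _), div_rpow (exp_pos 1).le hδ.le,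
    ← exp_mul, ← exp_mul, ← rpow_mul hδ.le]
  exact div_le_div_of_nonneg_right (exp_le_exp.2 (by nlinarith)) (rpow_nonneg hδ.le _)

/-- The Chernoff-tail computation in the proof of Theorem 5 of the paper
(known parameters). -/
theorem chernoff_tail_known (d B b : ℝ) (hd : 1 ≤ d) (hB : 2 ≤ B) (hb : B ≤ b)
    (p δ : ℝ) (hp : p = 1 - 1 / (2 * Real.exp 1) * (1 / (2 * d)) ^ (1 / (B - 1)))
    (hδ : (1 + δ) * (1 - p) * b = b - 1) :
    (Real.exp δ / (1 + δ) ^ (1 + δ)) ^ ((1 - p) * b) ≤ 1 / (2 * d) := by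
  have hd0 : 0 < d := by linarith
  set r := (1 / (2 * d)) ^ (1 / (B - 1))
  have hr : 0 < r := by positivity
  have hq : 1 - p = r / (2 * exp 1) := by rw [hp]; ring
  have hμ : 0 < (1 - p) * b := by rw [hq]; have := hB.trans hb; positivity
  have hmean : (1 + δ) * ((1 - p) * b) = b - 1 := by rw [← mul_assoc, hδ]
  have hδpos : 0 < 1 + δ := pos_of_mul_pos_left (hmean ▸ by linarith) hμ.le
  have hb1 : 0 < b - 1 := by linarith
  have hb_div : b / (b - 1) ≤ 2 := by rw [div_le_iff₀ hb1]; linarith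
  calc (exp δ / (1 + δ) ^ (1 + δ)) ^ ((1 - p) * b)
      ≤ (exp 1 / (1 + δ)) ^ (b - 1) := hmean ▸ chernoff_tail_le_exp_one_div_rpow hδpos hμ.le
    _ = (r / 2 * (b / (b - 1))) ^ (b - 1) := by
        rw [eq_div_of_mul_eq hμ.ne' hmean, hq]
        field_simp
    _ ≤ r ^ (b - 1) := by
        refine rpow_le_rpow (mul_nonneg (by positivity) (div_nonneg (by linarith) hb1.le)) ?_ hb1.le
        nlinarith
    _ = (1 / (2 * d)) ^ ((b - 1) / (B - 1)) := by rw [← rpow_mul (by positivity)]; ring_nf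
    _ ≤ 1 / (2 * d) :=
        rpow_le_self_of_le_one (by positivity) (by rw [div_le_one₀ (by linarith)]; linarith)
          (by rw [one_le_div₀ (by linarith)]; linarith)
end
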